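/- arXiv:2405.16035 — 2 statements merged into one kernel-verified Lean document; each statement's English description precedes it below -/
import Mathlib

section
/- Let T1 and T2 be distinct nontrivial root components of a strongly tree-child leaf-labeled network N. Then any directional μ-vector μ_d(u, u') with uu' an edge of T1 is incomparable (in the coordinatewise partial order) to any directional μ-vector μ_d(v, v') with vv' an edge of T2. -/
open Relation

/-- A semidirected graph: a set of undirected edges and a set of directed edges. -/
structure SDG (V : Type) where
  undir : Finset (Sym2 V)
  dir : Finset (V × V)

namespace SDG

variable {V : Type} [DecidableEq V]

/-- one step along a directed edge -/
def dstep (N : SDG V) (u v : V) : Prop := (u, v) ∈ N.dir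

/-- one step along an undirected edge -/
def ustep (N : SDG V) (u v : V) : Prop := s(u, v) ∈ N.undir

/-- one step of a semidirected path -/
def sstep (N : SDG V) (u v : V) : Prop := N.dstep u v ∨ N.ustep u v

/-- directed reachability (existence of a directed path) -/
def dreach (N : SDG V) : V → V → Prop := ReflTransGen N.dstep

/-- reachability using undirected edges only -/
def ureach (N : SDG V) : V → V → Prop := ReflTransGen N.ustep

/-- semidirected reachability (existence of a semidirected path) -/
def sreach (N : SDG V) : V → V → Prop := ReflTransGen N.sstep

/-- `M` is obtained from `N` by directing some of the undirected edges of `N`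
(each such edge receiving exactly one direction). -/
def Directs (N M : SDG V) : Prop :=
  M.undir ⊆ N.undir ∧ N.dir ⊆ M.dir ∧
    (∀ e ∈ M.dir, e ∉ N.dir → s(e.1, e.2) ∈ N.undir ∧ s(e.1, e.2) ∉ M.undir) ∧
    (∀ p ∈ N.undir, p ∉ M.undir →
      ∃! e : V × V, e ∈ M.dir ∧ e ∉ N.dir ∧ s(e.1, e.2) = p)

/-- a semidirected graph is directed when it has no undirected edges -/
def IsDirected (N : SDG V) : Prop := N.undir = ∅

/-- existence of a directed cycle -/
def HasDirCycle (N : SDG V) : Prop := ∃ e ∈ N.dir, N.dreach e.2 e.1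

/-- `N` is acyclic if no compatible directed graph (obtained by directing all
undirected edges) has a directed cycle. -/
def Acyclic (N : SDG V) : Prop :=
  ∀ G : SDG V, Directs N G → G.IsDirected → ¬ G.HasDirCycle

/-- in-degree: number of incoming directed edges -/
def ideg (N : SDG V) (v : V) : ℕ := (N.dir.filter fun e => e.2 = v).card

/-- out-degree: number of outgoing directed edges -/
def odeg (N : SDG V) (v : V) : ℕ := (N.dir.filter fun e => e.1 = v).card

/-- number of incident undirected edges -/
def udeg (N : SDG V) (v : V) : ℕ := (N.undir.filter fun p => v ∈ p).card

/-- total degree -/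
def deg (N : SDG V) (v : V) : ℕ := N.ideg v + N.odeg v + N.udeg v

/-- hybrid edges: directed edges whose child is a hybrid node (in-degree ≥ 2) -/
def hybridEdges (N : SDG V) : Finset (V × V) := N.dir.filter fun e => 2 ≤ N.ideg e.2

/-- no self-loops, and no undirected edge parallel to a directed edge -/
def Proper (N : SDG V) : Prop :=
  (∀ p ∈ N.undir, ¬ p.IsDiag) ∧ (∀ e ∈ N.dir, e.1 ≠ e.2) ∧
    ∀ e ∈ N.dir, s(e.1, e.2) ∉ N.undir

/-- `M` is phylogenetically compatible with `N`: `M` is an SDAG obtained from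
`N` by directing some undirected edges, keeping the same hybrid edges. -/
def PhyloCompat (M N : SDG V) : Prop :=
  Directs N M ∧ M.Acyclic ∧ M.hybridEdges = N.hybridEdges

/-- a rooted partner of `N`: a DAG phylogenetically compatible with `N` -/
def RootedPartner (G N : SDG V) : Prop := PhyloCompat G N ∧ G.IsDirected

/-- a network: an SDAG admitting a rooted partner -/
def IsNetwork (N : SDG V) : Prop := N.Acyclic ∧ ∃ G : SDG V, RootedPartner G N

/-- mutual semidirected reachability (same undirected component) -/
def sim (N : SDG V) (u v : V) : Prop := N.sreach u v ∧ N.sreach v u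

/-- `v` lies in a root component: its undirected component is maximal for the
semidirected-path preorder -/
def InRootComp (N : SDG V) (v : V) : Prop := ∀ u, N.sreach u v → N.sreach v u

/-- the undirected simple graph induced by the undirected edges -/
def undirGraph (N : SDG V) : SimpleGraph V :=
  SimpleGraph.fromEdgeSet (N.undir : Set (Sym2 V))

/-- leaf in some rooted partner -/
def IsUnrootedLeaf (N : SDG V) (v : V) : Prop :=
  ∃ G : SDG V, RootedPartner G N ∧ G.odeg v = 0

/-- leaf in every rooted partner -/
def IsRootedLeaf (N : SDG V) (v : V) : Prop :=
  ∀ G : SDG V, RootedPartner G N → G.odeg v = 0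

/-- a leaf-labeled network: a network whose unrooted leaves are all rooted leaves
(so that its leaf set is stable across rooted partners and can be labeled) -/
def LNetwork (N : SDG V) : Prop :=
  IsNetwork N ∧ ∀ v, IsUnrootedLeaf N v → IsRootedLeaf N v

/-- `l` is (the list of nodes of) a directed path from `u` to `v` in `G` -/
def IsDPathList (G : SDG V) (u v : V) (l : List V) : Prop :=
  l.head? = some u ∧ l.getLast? = some v ∧ l.Chain' G.dstep

/-- the number of directed paths from `u` to `v` -/
noncomputable def pathCount (G : SDG V) (u v : V) : ℕ :=
  Set.ncard {l : List V | IsDPathList G u v l}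

/-- the set of directed paths starting at `v` -/
def startPaths (G : SDG V) (v : V) : Set (List V) :=
  {l : List V | l.head? = some v ∧ l.Chain' G.dstep}

/-- a root choice function: picks one node in each root component, constant on
root components, and the identity outside of root components -/
def RootChoice (N : SDG V) (ρ : V → V) : Prop :=
  (∀ v, InRootComp N v → sim N v (ρ v) ∧ ∀ u, InRootComp N u → sim N u v → ρ u = ρ v) ∧
    ∀ v, ¬ InRootComp N v → ρ v = v

/-- `G` is the rooted partner of `N` whose set of roots (in-degree 0 nodes) is the
image of the root choice function `ρ` -/
def PartnerFor (N : SDG V) (ρ : V → V) (G : SDG V) : Prop :=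
  RootedPartner G N ∧ {v | G.ideg v = 0} = ρ '' {v | InRootComp N v}

-- the directional μ-vector of `(u, v)`: path counts from `v` to each node in any
-- rooted partner directing the edge `uv` as `(u, v)`
open Classical in
noncomputable def muD (N : SDG V) (u v : V) : V → ℕ :=
  if h : ∃ G : SDG V, RootedPartner G N ∧ (u, v) ∈ G.dir then
    fun x => pathCount h.choose v x
  else fun _ => 0

-- the root μ-vector of the root component of `t`
open Classical in
noncomputable def muR (N : SDG V) (t : V) : V → ℕ :=
  if h : ∃ p : (V → V) × SDG V, RootChoice N p.1 ∧ PartnerFor N p.1 p.2 then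
    fun x => pathCount h.choose.2 (h.choose.1 t) x
  else fun _ => 0

/-- a DAG is tree-child if every non-leaf node has a tree-node child -/
def TreeChildDAG (G : SDG V) : Prop :=
  ∀ v, 0 < G.odeg v → ∃ w, (v, w) ∈ G.dir ∧ G.ideg w ≤ 1

/-- all rooted partners are tree-child -/
def StronglyTreeChild (N : SDG V) : Prop :=
  ∀ G : SDG V, RootedPartner G N → TreeChildDAG G

/-- some rooted partner is tree-child -/
def WeaklyTreeChild (N : SDG V) : Prop :=
  ∃ G : SDG V, RootedPartner G N ∧ TreeChildDAG G

/-- coordinatewise comparison of μ-vectors over the leaves of `N` -/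
def muLE (N : SDG V) (m m' : V → ℕ) : Prop :=
  ∀ x, IsUnrootedLeaf N x → m x ≤ m' x

/-- incomparability of μ-vectors (over the leaves of `N`) -/
def muIncomp (N : SDG V) (m m' : V → ℕ) : Prop :=
  ¬ muLE N m m' ∧ ¬ muLE N m' m

/-- a network is complete when every undirected edge lies in a root component
(equivalently, it equals its completion) -/
def Complete (N : SDG V) : Prop := ∀ p ∈ N.undir, ∀ v ∈ p, InRootComp N v

/-- reachability by a tree path (directed path whose edges are all tree edges) -/
def treeReach (G : SDG V) : V → V → Prop :=
  ReflTransGen fun a b => (a, b) ∈ G.dir ∧ G.ideg b ≤ 1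

/-- `v` has a tree descendant leaf -/
def HasTreeDescLeaf (G : SDG V) (v : V) : Prop := ∃ x, G.odeg x = 0 ∧ treeReach G v x

/-- `l` is an elementary path from `u` to `v`: a directed path whose first node
has out-degree 1 and whose intermediate nodes have in- and out-degree 1 -/
def IsElemPathList (G : SDG V) (u v : V) (l : List V) : Prop :=
  l.head? = some u ∧ l.getLast? = some v ∧ l.Chain' G.dstep ∧ 2 ≤ l.length ∧
    G.odeg u = 1 ∧ ∀ w ∈ (l.drop 1).dropLast, G.ideg w = 1 ∧ G.odeg w = 1

/-- an elementary node: a tree node with out-degree = total degree = 1, or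
out-degree < total degree = 2 -/
def IsElemNode (G : SDG V) (v : V) : Prop :=
  G.ideg v ≤ 1 ∧ ((G.odeg v = 1 ∧ G.deg v = 1) ∨ (G.odeg v < G.deg v ∧ G.deg v = 2))

/-- the setoid identifying nodes connected by undirected edges -/
def usetoid (N : SDG V) : Setoid V :=
  ⟨Relation.EqvGen N.ustep, Relation.EqvGen.is_equivalence _⟩

/-- the edge relation of the contraction of `N`: the directed graph on the
quotient by undirected connectivity, with the directed edges of `N` -/
def crel (N : SDG V) (x y : Quotient N.usetoid) : Prop :=
  ∃ u v : V, (u, v) ∈ N.dir ∧ Quotient.mk N.usetoid u = x ∧ Quotient.mk N.usetoid v = y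

section Proof13
set_option linter.unusedSectionVars false

variable {V : Type} [DecidableEq V] {N G : SDG V}

lemma hybridEdges_subset_dir (N : SDG V) : N.hybridEdges ⊆ N.dir :=
  Finset.filter_subset _ _

lemma directs_refl (G : SDG V) : Directs G G :=
  ⟨Finset.Subset.refl _, Finset.Subset.refl _, fun _ he hne => absurd he hne,
   fun _ hp hnp => absurd hp hnp⟩

lemma partner_no_cycle (hG : RootedPartner G N) : ¬ G.HasDirCycle :=
  hG.1.2.1 G (directs_refl G) hG.2

lemma partner_acyclic (hG : RootedPartner G N) {a b : V} (h : (a, b) ∈ G.dir) :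
    ¬ G.dreach b a := fun hr => partner_no_cycle hG ⟨(a, b), h, hr⟩

lemma partner_dir_subset (hG : RootedPartner G N) : N.dir ⊆ G.dir := hG.1.1.2.1

lemma partner_extra (hG : RootedPartner G N) {e : V × V} (he : e ∈ G.dir)
    (hne : e ∉ N.dir) : s(e.1, e.2) ∈ N.undir := (hG.1.1.2.2.1 e he hne).1

lemma two_le_ideg {e1 e2 : V × V} {b : V} (h1 : e1 ∈ G.dir) (h2 : e2 ∈ G.dir)
    (hb1 : e1.2 = b) (hb2 : e2.2 = b) (hne : e1 ≠ e2) : 2 ≤ G.ideg b := by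
  have hsub : ({e1, e2} : Finset (V × V)) ⊆ G.dir.filter fun e => e.2 = b := by
    intro e he
    simp only [Finset.mem_insert, Finset.mem_singleton] at he
    rcases he with rfl | rfl <;> simp [Finset.mem_filter, h1, h2, hb1, hb2]
  calc 2 = ({e1, e2} : Finset (V × V)).card := (Finset.card_pair hne).symm
    _ ≤ _ := Finset.card_le_card hsub

lemma ideg_le_one (hG : RootedPartner G N) {e : V × V} (he : e ∈ G.dir)
    (hne : e ∉ N.dir) : G.ideg e.2 ≤ 1 := by
  by_contra h
  have h2 : 2 ≤ G.ideg e.2 := by omega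
  have hmem : e ∈ G.hybridEdges := Finset.mem_filter.mpr ⟨he, h2⟩
  rw [hG.1.2.2] at hmem
  exact hne (hybridEdges_subset_dir N hmem)

lemma ideg_mono (hG : RootedPartner G N) (b : V) : N.ideg b ≤ G.ideg b :=
  Finset.card_le_card (Finset.filter_subset_filter _ (partner_dir_subset hG))

lemma orient (hG : RootedPartner G N) {a b : V} (hab : s(a, b) ∈ N.undir) :
    ((a, b) ∈ G.dir ∧ (a, b) ∉ N.dir) ∨ ((b, a) ∈ G.dir ∧ (b, a) ∉ N.dir) := by
  have hnu : s(a, b) ∉ G.undir := by rw [hG.2]; exact Finset.notMem_empty _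
  obtain ⟨e, ⟨he, heN, hs⟩, -⟩ := hG.1.1.2.2.2 _ hab hnu
  rcases Sym2.eq_iff.mp hs with ⟨ha, hb⟩ | ⟨ha, hb⟩
  · left; have : e = (a, b) := Prod.ext ha hb; rw [this] at he heN; exact ⟨he, heN⟩
  · right; have : e = (b, a) := Prod.ext ha hb; rw [this] at he heN; exact ⟨he, heN⟩

lemma orient_unique (hG : RootedPartner G N) {a b : V} (hab : s(a, b) ∈ N.undir)
    {e e' : V × V} (he : e ∈ G.dir) (heN : e ∉ N.dir) (hs : s(e.1, e.2) = s(a, b))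
    (he' : e' ∈ G.dir) (heN' : e' ∉ N.dir) (hs' : s(e'.1, e'.2) = s(a, b)) : e = e' := by
  have hnu : s(a, b) ∉ G.undir := by rw [hG.2]; exact Finset.notMem_empty _
  obtain ⟨f, -, huniq⟩ := hG.1.1.2.2.2 _ hab hnu
  rw [huniq e ⟨he, heN, hs⟩, huniq e' ⟨he', heN', hs'⟩]

lemma partner_sstep (hG : RootedPartner G N) {a b : V} (h : (a, b) ∈ G.dir) :
    N.sstep a b := by
  by_cases hN : (a, b) ∈ N.dir
  · exact Or.inl hN
  · exact Or.inr (partner_extra hG h hN)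

lemma partner_dreach_sreach (hG : RootedPartner G N) {a b : V} (h : G.dreach a b) :
    N.sreach a b := ReflTransGen.mono (fun _ _ hs => partner_sstep hG hs) _ _ h

lemma ustep_symm {a b : V} (h : N.ustep a b) : N.ustep b a := by
  unfold ustep at *; rwa [Sym2.eq_swap]

/-- Fact K: common ancestor within oriented undirected forest. -/
lemma factK (hG : RootedPartner G N) {m x : V} (h : N.ureach m x) :
    ∃ y, ReflTransGen (fun a b => (a, b) ∈ G.dir ∧ (a, b) ∉ N.dir) y m ∧
         ReflTransGen (fun a b => (a, b) ∈ G.dir ∧ (a, b) ∉ N.dir) y x := by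
  induction h with
  | refl => exact ⟨m, ReflTransGen.refl, ReflTransGen.refl⟩
  | @tail b c hmb hbc ih =>
    obtain ⟨y, hym, hyb⟩ := ih
    rcases orient hG hbc with ⟨hd, hdN⟩ | ⟨hd, hdN⟩
    · exact ⟨y, hym, hyb.tail ⟨hd, hdN⟩⟩
    · -- (c, b) ∈ G.dir \ N.dir
      by_cases hy : y = b
      · subst hy
        exact ⟨c, ReflTransGen.head ⟨hd, hdN⟩ hym, ReflTransGen.refl⟩
      · rcases hyb.cases_tail with heq | ⟨q, hyq, hqb⟩
        · exact absurd heq.symm hy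
        · have hq : q = c := by
            by_contra hne
            have h2 : 2 ≤ G.ideg b :=
              two_le_ideg hqb.1 hd rfl rfl (fun hh => hne (congrArg Prod.fst hh))
            have h1 : G.ideg b ≤ 1 := ideg_le_one hG hd hdN
            omega
          subst hq
          exact ⟨y, hym, hyq⟩

/-- Fact I: a node with no incoming oriented-undirected edge reaches its whole
undirected component. -/
lemma factI (hG : RootedPartner G N) {z m : V}
    (hz : ∀ w, (w, z) ∈ G.dir → (w, z) ∈ N.dir) (h : N.ureach z m) :
    G.dreach z m := by
  obtain ⟨y, hyz, hym⟩ := factK hG h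
  have hy : y = z := by
    rcases hyz.cases_tail with heq | ⟨q, -, hq⟩
    · exact heq.symm
    · exact absurd (hz q hq.1) hq.2
  subst hy
  exact ReflTransGen.mono (fun _ _ (hs : _ ∧ _) => hs.1) _ _ hym

lemma no_extra_incoming (hG : RootedPartner G N) {a c : V} (h : (a, c) ∈ N.dir) :
    ∀ w, (w, c) ∈ G.dir → (w, c) ∈ N.dir := by
  intro w hw
  by_contra hwN
  by_cases hwa : w = a
  · subst hwa; exact hwN h
  · have hle := ideg_le_one hG hw hwN
    have h2 : 2 ≤ G.ideg c :=
      two_le_ideg hw (partner_dir_subset hG h) rfl rfl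
        (fun hh => hwa (congrArg Prod.fst hh))
    simp only at hle h2
    omega

/-- Claim E: a semidirected path can be rerouted as undirected moves followed by
a directed path of the partner. -/
lemma claimE (hG : RootedPartner G N) {x y : V} (h : N.sreach x y) :
    ∃ m, N.ureach x m ∧ G.dreach m y := by
  induction h using ReflTransGen.head_induction_on with
  | refl => exact ⟨y, ReflTransGen.refl, ReflTransGen.refl⟩
  | @head a c hstep htail ih =>
    obtain ⟨m, hum, hdm⟩ := ih
    rcases hstep with hd | hust
    · have hreach : G.dreach c m := factI hG (no_extra_incoming hG hd) hum
      exact ⟨a, ReflTransGen.refl,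
        ReflTransGen.head (partner_dir_subset hG hd) (hreach.trans hdm)⟩
    · exact ⟨m, ReflTransGen.head hust hum, hdm⟩

/-- Claim D: no directed edge of `N` points into a node that semireaches its tail. -/
lemma claimD (hG : RootedPartner G N) {c t : V} (hct : (c, t) ∈ N.dir)
    (h : N.sreach t c) : False := by
  obtain ⟨m, hum, hdm⟩ := claimE hG h
  have ht : G.dreach t m := factI hG (no_extra_incoming hG hct) hum
  exact partner_acyclic hG (partner_dir_subset hG hct) (ht.trans hdm)

lemma no_dir_into_root (hG : RootedPartner G N) {a z : V} (hz : InRootComp N z)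
    (h : (a, z) ∈ N.dir) : False :=
  claimD hG h (hz a (ReflTransGen.single (Or.inl h)))

lemma inRootComp_ustep {z a : V} (hz : InRootComp N z) (hza : s(z, a) ∈ N.undir) :
    InRootComp N a := by
  intro w hw
  have hwz : N.sreach w z := hw.tail (Or.inr (ustep_symm hza))
  have hzw : N.sreach z w := hz w hwz
  exact ReflTransGen.head (Or.inr (ustep_symm hza)) hzw

/-! ### Flipping one oriented undirected edge whose tail is a root -/

def eflip (G : SDG V) (y z : V) : SDG V := ⟨∅, insert (z, y) (G.dir.erase (y, z))⟩

lemma eflip_mem {G : SDG V} {y z : V} (e : V × V) :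
    e ∈ (eflip G y z).dir ↔ e = (z, y) ∨ (e ∈ G.dir ∧ e ≠ (y, z)) := by
  simp only [eflip, Finset.mem_insert, Finset.mem_erase]
  tauto

lemma dir_eq_of_directs_directed {M H : SDG V} (h : Directs M H) (hM : M.IsDirected) :
    H.dir = M.dir := by
  apply Finset.Subset.antisymm
  · intro e he
    by_cases hM' : e ∈ M.dir
    · exact hM'
    · have := (h.2.2.1 e he hM').1
      rw [hM] at this
      exact absurd this (Finset.notMem_empty _)
  · exact h.2.1

lemma acyclic_of_no_cycle {M : SDG V} (hM : M.IsDirected) (h : ¬ M.HasDirCycle) :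
    M.Acyclic := by
  intro H hd _ hc
  obtain ⟨e, heH, hr⟩ := hc
  have he : H.dir = M.dir := dir_eq_of_directs_directed hd hM
  apply h
  refine ⟨e, he ▸ heH, ?_⟩
  exact ReflTransGen.mono (fun a b hab => show (a, b) ∈ M.dir from he ▸ hab) _ _ hr

lemma eflip_partner (hP : N.Proper) (hG : RootedPartner G N) {y z : V}
    (hyz : (y, z) ∈ G.dir) (hyzN : (y, z) ∉ N.dir) (hy : G.ideg y = 0) :
    RootedPartner (eflip G y z) N ∧ (eflip G y z).ideg z = 0 := by
  have hu : s(y, z) ∈ N.undir := partner_extra hG hyz hyzN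
  have hne : y ≠ z := by
    intro h
    exact hP.1 _ hu (Sym2.mk_isDiag_iff.mpr h)
  have hzyN : (z, y) ∉ N.dir := by
    intro h
    exact hP.2.2 (z, y) h (by rw [show s((z,y).1, (z,y).2) = s(y, z) from Sym2.eq_swap]; exact hu)
  have hzyG : (z, y) ∉ G.dir := by
    intro h
    have := orient_unique hG hu (e := (y, z)) (e' := (z, y)) hyz hyzN rfl h hzyN Sym2.eq_swap
    exact hne (congrArg Prod.fst this)
  -- in-degree of z in G is exactly 1
  have hidegz_le : G.ideg z ≤ 1 := ideg_le_one hG hyz hyzN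
  have hidegz_ge : 0 < G.ideg z :=
    Finset.card_pos.mpr ⟨(y, z), Finset.mem_filter.mpr ⟨hyz, rfl⟩⟩
  have hfz : G.dir.filter (fun e => e.2 = z) = {(y, z)} := by
    apply Finset.eq_singleton_iff_unique_mem.mpr
    refine ⟨Finset.mem_filter.mpr ⟨hyz, rfl⟩, ?_⟩
    intro e he
    exact Finset.card_le_one.mp hidegz_le e he (y, z) (Finset.mem_filter.mpr ⟨hyz, rfl⟩)
  -- filters of the flipped graph
  have ffz : (eflip G y z).dir.filter (fun e => e.2 = z) = ∅ := by
    apply Finset.eq_empty_iff_forall_notMem.mpr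
    intro e he
    obtain ⟨heD, he2⟩ := Finset.mem_filter.mp he
    rcases (eflip_mem e).mp heD with rfl | ⟨heG, hene⟩
    · exact hne (he2 ▸ rfl)
    · have : e = (y, z) := by
        have : e ∈ G.dir.filter (fun e => e.2 = z) := Finset.mem_filter.mpr ⟨heG, he2⟩
        rw [hfz] at this
        exact Finset.mem_singleton.mp this
      exact hene this
  have ffy : (eflip G y z).dir.filter (fun e => e.2 = y) = {(z, y)} := by
    apply Finset.eq_singleton_iff_unique_mem.mpr
    constructor
    · exact Finset.mem_filter.mpr ⟨(eflip_mem _).mpr (Or.inl rfl), rfl⟩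
    · intro e he
      obtain ⟨heD, he2⟩ := Finset.mem_filter.mp he
      rcases (eflip_mem e).mp heD with rfl | ⟨heG, -⟩
      · rfl
      · exfalso
        have : e ∈ G.dir.filter (fun e => e.2 = y) := Finset.mem_filter.mpr ⟨heG, he2⟩
        have h0 : 0 < G.ideg y := Finset.card_pos.mpr ⟨e, this⟩
        omega
  have ffw : ∀ w, w ≠ y → w ≠ z →
      (eflip G y z).dir.filter (fun e => e.2 = w) = G.dir.filter (fun e => e.2 = w) := by
    intro w hwy hwz
    apply Finset.ext
    intro e
    simp only [Finset.mem_filter]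
    constructor
    · rintro ⟨heD, he2⟩
      rcases (eflip_mem e).mp heD with rfl | ⟨heG, -⟩
      · exact absurd he2 (by simpa using hwy.symm)
      · exact ⟨heG, he2⟩
    · rintro ⟨heG, he2⟩
      refine ⟨(eflip_mem e).mpr (Or.inr ⟨heG, ?_⟩), he2⟩
      intro h
      rw [h] at he2
      exact hwz he2.symm
  have hidz : (eflip G y z).ideg z = 0 := by
    unfold ideg; rw [ffz]; simp
  have hidy : (eflip G y z).ideg y = 1 := by
    unfold ideg; rw [ffy]; simp
  have hidw : ∀ w, w ≠ y → w ≠ z → (eflip G y z).ideg w = G.ideg w := by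
    intro w hwy hwz
    unfold ideg; rw [ffw w hwy hwz]
  -- Directs N (eflip G y z)
  have hdirects : Directs N (eflip G y z) := by
    refine ⟨by simp [eflip], ?_, ?_, ?_⟩
    · intro e he
      exact (eflip_mem e).mpr (Or.inr ⟨partner_dir_subset hG he, fun h => hyzN (h ▸ he)⟩)
    · intro e he heN
      rcases (eflip_mem e).mp he with rfl | ⟨heG, -⟩
      · exact ⟨by rw [show s((z,y).1, (z,y).2) = s(y, z) from Sym2.eq_swap]; exact hu,
          Finset.notMem_empty _⟩
      · exact ⟨partner_extra hG heG heN, Finset.notMem_empty _⟩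
    · intro p hp _
      have hpG : p ∉ G.undir := by rw [hG.2]; exact Finset.notMem_empty _
      obtain ⟨e0, ⟨he0, he0N, hs0⟩, huniq⟩ := hG.1.1.2.2.2 p hp hpG
      by_cases h0 : e0 = (y, z)
      · subst h0
        refine ⟨(z, y), ⟨(eflip_mem _).mpr (Or.inl rfl), hzyN,
            by rw [show s((z,y).1, (z,y).2) = s(y, z) from Sym2.eq_swap]; exact hs0⟩, ?_⟩
        rintro e ⟨he, heN, hs⟩
        rcases (eflip_mem e).mp he with rfl | ⟨heG, hene⟩
        · rfl
        · exact absurd (huniq e ⟨heG, heN, hs⟩) hene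
      · refine ⟨e0, ⟨(eflip_mem _).mpr (Or.inr ⟨he0, h0⟩), he0N, hs0⟩, ?_⟩
        rintro e ⟨he, heN, hs⟩
        rcases (eflip_mem e).mp he with rfl | ⟨heG, -⟩
        · exfalso
          apply h0
          have hs' : s((y, z).1, (y, z).2) = p := by
            rw [show s((y,z).1, (y,z).2) = s((z,y).1, (z,y).2) from Sym2.eq_swap]
            exact hs
          exact (huniq (y, z) ⟨hyz, hyzN, hs'⟩).symm ▸ rfl
        · exact huniq e ⟨heG, heN, hs⟩
  -- No cycles in the flipped graph
  have hnocyc : ¬ (eflip G y z).HasDirCycle := by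
    set rm : V → V → Prop := fun a b => (a, b) ∈ G.dir.erase (y, z) with hrm
    have hmG : ∀ {a b}, ReflTransGen rm a b → G.dreach a b :=
      fun h => ReflTransGen.mono (fun a b hab => (Finset.mem_erase.mp hab).2) _ _ h
    have hnyz : ¬ ReflTransGen rm y z := by
      intro h
      rcases h.cases_tail with heq | ⟨q, -, hq⟩
      · exact hne heq.symm
      · have hqG := (Finset.mem_erase.mp hq).2
        have hqne : (q, z) ≠ (y, z) := (Finset.mem_erase.mp hq).1
        have h2 : 2 ≤ G.ideg z := two_le_ideg hqG hyz rfl rfl hqne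
        omega
    have decomp : ∀ a b, ReflTransGen (fun p q => (p, q) ∈ (eflip G y z).dir) a b →
        ReflTransGen rm a b ∨ (ReflTransGen rm a z ∧ ReflTransGen rm y b) := by
      intro a b h
      induction h using ReflTransGen.head_induction_on with
      | refl => exact Or.inl ReflTransGen.refl
      | @head p q hpq htail ih =>
        rcases (eflip_mem (p, q)).mp hpq with heq | ⟨hpqG, hpqne⟩
        · -- (p, q) = (z, y), i.e. p = z, q = y
          have hp : p = z := congrArg Prod.fst heq
          have hq : q = y := congrArg Prod.snd heq
          subst hp; subst hq
          rcases ih with h' | ⟨h1, -⟩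
          · exact Or.inr ⟨ReflTransGen.refl, h'⟩
          · exact absurd h1 hnyz
        · have hstep : rm p q := Finset.mem_erase.mpr ⟨hpqne, hpqG⟩
          rcases ih with h' | ⟨h1, h2⟩
          · exact Or.inl (ReflTransGen.head hstep h')
          · exact Or.inr ⟨ReflTransGen.head hstep h1, h2⟩
    rintro ⟨e, he, hr⟩
    have hr' := decomp e.2 e.1 hr
    rcases (eflip_mem e).mp he with heq | ⟨heG, hene⟩
    · -- e = (z, y): a path from y back to z
      rw [heq] at hr'
      rcases hr' with h' | ⟨-, h2⟩
      · exact hnyz h'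
      · exact hnyz h2
    · rcases hr' with h' | ⟨h1, h2⟩
      · exact partner_acyclic hG heG (hmG h')
      · -- y ↝ e.1 → e.2 ↝ z in rm, giving y ↝ z
        have hstep : rm e.1 e.2 := Finset.mem_erase.mpr ⟨hene, heG⟩
        exact hnyz ((h2.tail hstep).trans h1)
  -- hybrid edges preserved
  have hhyb : (eflip G y z).hybridEdges = G.hybridEdges := by
    apply Finset.ext
    intro e
    simp only [hybridEdges, Finset.mem_filter]
    constructor
    · rintro ⟨he, h2⟩
      have hey : e.2 ≠ y := by rintro h; rw [h, hidy] at h2; omega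
      have hez : e.2 ≠ z := by rintro h; rw [h, hidz] at h2; omega
      have heG : e ∈ G.dir := by
        rcases (eflip_mem e).mp he with heq | ⟨heG, -⟩
        · exact absurd (congrArg Prod.snd heq) hey
        · exact heG
      exact ⟨heG, by rwa [hidw e.2 hey hez] at h2⟩
    · rintro ⟨he, h2⟩
      have hey : e.2 ≠ y := by rintro h; rw [h] at h2; omega
      have hez : e.2 ≠ z := by rintro h; rw [h] at h2; omega
      refine ⟨(eflip_mem e).mpr (Or.inr ⟨he, ?_⟩), by rwa [hidw e.2 hey hez]⟩
      rintro h
      exact hez (congrArg Prod.snd h)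
  refine ⟨⟨⟨hdirects, acyclic_of_no_cycle rfl hnocyc, ?_⟩, rfl⟩, hidz⟩
  rw [hhyb, hG.1.2.2]

/-! ### Rerooting a root component -/

lemma anc_finite (G : SDG V) (z : V) : {w | G.dreach w z}.Finite := by
  apply Set.Finite.subset
    (Set.Finite.insert z (G.dir.image Prod.fst).finite_toSet)
  intro w hw
  rcases hw.cases_head with heq | ⟨c, hc, -⟩
  · exact Or.inl heq
  · exact Or.inr (Finset.mem_coe.mpr (Finset.mem_image.mpr ⟨(w, c), hc, rfl⟩))

lemma desc_finite (G : SDG V) (z : V) : {w | G.dreach z w}.Finite := by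
  apply Set.Finite.subset
    (Set.Finite.insert z (G.dir.image Prod.snd).finite_toSet)
  intro w hw
  rcases hw.cases_tail with heq | ⟨c, -, hc⟩
  · exact Or.inl heq
  · exact Or.inr (Finset.mem_coe.mpr (Finset.mem_image.mpr ⟨(c, w), hc, rfl⟩))

lemma rerootAux (hP : N.Proper) : ∀ n (G : SDG V), RootedPartner G N →
    ∀ z, InRootComp N z → Set.ncard {w | G.dreach w z} ≤ n →
    ∃ H, RootedPartner H N ∧ H.ideg z = 0 ∧
      ∀ e : V × V, ¬ G.dreach e.2 z → (e ∈ H.dir ↔ e ∈ G.dir) := by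
  intro n
  induction n with
  | zero =>
    intro G hG z hz hcard
    exfalso
    have : 0 < Set.ncard {w | G.dreach w z} :=
      (Set.ncard_pos (anc_finite G z)).mpr ⟨z, ReflTransGen.refl⟩
    omega
  | succ n ih =>
    intro G hG z hz hcard
    by_cases h0 : G.ideg z = 0
    · exact ⟨G, hG, h0, fun _ _ => Iff.rfl⟩
    · obtain ⟨e, he⟩ := Finset.card_pos.mp (Nat.pos_of_ne_zero h0)
      obtain ⟨heG, he2⟩ := Finset.mem_filter.mp he
      set a := e.1 with ha
      have heaz : (a, z) ∈ G.dir := by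
        have : e = (a, z) := Prod.ext rfl he2
        rwa [this] at heG
      have hazN : (a, z) ∉ N.dir := fun h => no_dir_into_root hG hz h
      have hundir : s(a, z) ∈ N.undir := partner_extra hG heaz hazN
      have haroot : InRootComp N a :=
        inRootComp_ustep hz (by rwa [Sym2.eq_swap])
      have hnza : ¬ G.dreach z a := partner_acyclic hG heaz
      have hsub : {w | G.dreach w a} ⊂ {w | G.dreach w z} := by
        constructor
        · intro w hw
          exact hw.tail heaz
        · intro hsup
          exact hnza (hsup (ReflTransGen.refl : G.dreach z z))
      have hlt : Set.ncard {w | G.dreach w a} < Set.ncard {w | G.dreach w z} :=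
        Set.ncard_lt_ncard hsub (anc_finite G z)
      obtain ⟨H, hH, hHa, hagree⟩ := ih G hG a haroot (by omega)
      have hazH : (a, z) ∈ H.dir := (hagree (a, z) hnza).mpr heaz
      obtain ⟨hH', hz0⟩ := eflip_partner hP hH hazH hazN hHa
      refine ⟨eflip H a z, hH', hz0, ?_⟩
      intro f hf
      have hfa : ¬ G.dreach f.2 a := fun hh => hf (hh.tail heaz)
      have h1 : f ∈ H.dir ↔ f ∈ G.dir := hagree f hfa
      have hfza : f ≠ (z, a) := by
        intro h
        exact hfa (by rw [h]; exact ReflTransGen.refl)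
      have hfaz : f ≠ (a, z) := by
        intro h
        exact hf (by rw [h]; exact ReflTransGen.refl)
      rw [show (f ∈ (eflip H a z).dir) ↔ _ from eflip_mem f]
      constructor
      · rintro (h | ⟨hfH, -⟩)
        · exact absurd h hfza
        · exact h1.mp hfH
      · intro hfG
        exact Or.inr ⟨h1.mpr hfG, hfaz⟩

lemma exists_partner_dir (hP : N.Proper) (hL : LNetwork N) {a b : V}
    (hab : s(a, b) ∈ N.undir) (ha : InRootComp N a) :
    ∃ G, RootedPartner G N ∧ (a, b) ∈ G.dir := by
  obtain ⟨⟨-, G0, hG0⟩, -⟩ := hL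
  obtain ⟨H, hH, hHa, -⟩ := rerootAux hP _ G0 hG0 a ha le_rfl
  rcases orient hH hab with ⟨hd, -⟩ | ⟨hd, -⟩
  · exact ⟨H, hH, hd⟩
  · exfalso
    have : 0 < H.ideg a :=
      Finset.card_pos.mpr ⟨(b, a), Finset.mem_filter.mpr ⟨hd, rfl⟩⟩
    omega

/-! ### The separation lemma -/

lemma separation (_hP : N.Proper) {G1 G2 : SDG V}
    (hG1 : RootedPartner G1 N) (hG2 : RootedPartner G2 N)
    {u u' v v' x : V}
    (h1 : s(u, u') ∈ N.undir) (hu : InRootComp N u)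
    (h2 : s(v, v') ∈ N.undir) (hv : InRootComp N v)
    (htp : treeReach G1 u' x) (hdp : G2.dreach v' x) : N.sim u v := by
  have key : ∀ w, treeReach G1 w x → G2.dreach v' w ∨ N.sreach w v' := by
    intro w hw
    induction hw using ReflTransGen.head_induction_on with
    | refl => exact Or.inl hdp
    | @head a c hstep htail ih =>
      rcases ih with hd | hs
      · by_cases hvc : v' = c
        · exact Or.inr (hvc ▸ ReflTransGen.single (partner_sstep hG1 hstep.1))
        · rcases hd.cases_tail with heq | ⟨q, hvq, hq⟩
          · exact absurd heq.symm hvc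
          · -- hq : (q, c) ∈ G2.dir
            by_cases hN : (a, c) ∈ N.dir
            · by_cases hqN : (q, c) ∈ N.dir
              · have hqa : q = a := by
                  by_contra hne
                  have h2le : 2 ≤ N.ideg c :=
                    two_le_ideg hqN hN rfl rfl
                      (fun hh => hne (congrArg Prod.fst hh))
                  have hmono := ideg_mono hG1 c
                  have htc := hstep.2
                  omega
                exact Or.inl (hqa ▸ hvq)
              · exfalso
                have hle : G2.ideg c ≤ 1 := ideg_le_one hG2 hq hqN
                have h2le : 2 ≤ G2.ideg c :=
                  two_le_ideg hq (partner_dir_subset hG2 hN) rfl rfl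
                    (fun hh => hqN (hh ▸ hN))
                omega
            · have hund : s(a, c) ∈ N.undir := partner_extra hG1 hstep.1 hN
              rcases orient hG2 hund with ⟨hac, hacN⟩ | ⟨hca, -⟩
              · have hle : G2.ideg c ≤ 1 := ideg_le_one hG2 hac hacN
                have hqa : q = a := by
                  by_contra hne
                  have h2le : 2 ≤ G2.ideg c :=
                    two_le_ideg hq hac rfl rfl
                      (fun hh => hne (congrArg Prod.fst hh))
                  omega
                exact Or.inl (hqa ▸ hvq)
              · exact Or.inl (hd.tail hca)
      · exact Or.inr (ReflTransGen.head (partner_sstep hG1 hstep.1) hs)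
  have hust1 : N.ustep u u' := h1
  have hust2 : N.ustep v v' := h2
  rcases key u' htp with hd | hs
  · have s1 : N.sreach v' u := (partner_dreach_sreach hG2 hd).tail (Or.inr (ustep_symm hust1))
    have svu : N.sreach v u := ReflTransGen.head (Or.inr hust2) s1
    exact ⟨hu v svu, svu⟩
  · have suv : N.sreach u v :=
      ReflTransGen.head (Or.inr hust1) (hs.tail (Or.inr (ustep_symm hust2)))
    exact ⟨suv, hv u suv⟩

/-! ### Tree descendant leaves -/

lemma exists_tree_leaf (hG : RootedPartner G N) (hT : TreeChildDAG G) (w : V) :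
    ∃ x, G.odeg x = 0 ∧ treeReach G w x := by
  suffices h : ∀ n w, Set.ncard {z | G.dreach w z} ≤ n →
      ∃ x, G.odeg x = 0 ∧ treeReach G w x from h _ w le_rfl
  intro n
  induction n with
  | zero =>
    intro w hw
    exfalso
    have : 0 < Set.ncard {z | G.dreach w z} :=
      (Set.ncard_pos (desc_finite G w)).mpr ⟨w, ReflTransGen.refl⟩
    omega
  | succ n ih =>
    intro w hw
    by_cases h0 : G.odeg w = 0
    · exact ⟨w, h0, ReflTransGen.refl⟩
    · obtain ⟨w', hw', hideg⟩ := hT w (Nat.pos_of_ne_zero h0)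
      have hnc : ¬ G.dreach w' w := partner_acyclic hG hw'
      have hsub : {z | G.dreach w' z} ⊂ {z | G.dreach w z} := by
        constructor
        · intro t ht
          exact ReflTransGen.head hw' ht
        · intro hsup
          exact hnc (hsup (ReflTransGen.refl : G.dreach w w))
      have hlt := Set.ncard_lt_ncard hsub (desc_finite G w)
      obtain ⟨x, hx, ht⟩ := ih w' (by omega)
      exact ⟨x, hx, ReflTransGen.head ⟨hw', hideg⟩ ht⟩

/-! ### Path lists and path counts -/

lemma dpath_of_dreach (G : SDG V) {a b : V} (h : G.dreach a b) :
    ∃ l, IsDPathList G a b l := by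
  induction h using ReflTransGen.head_induction_on with
  | refl => exact ⟨[b], rfl, rfl, List.isChain_singleton b⟩
  | @head p q hstep htail ih =>
    obtain ⟨l, hh, hl, hc⟩ := ih
    refine ⟨p :: l, ?_, ?_, ?_⟩
    · simp
    · cases l with
      | nil => simp at hh
      | cons c t => rw [List.getLast?_cons_cons]; exact hl
    · apply List.isChain_cons.mpr
      refine ⟨?_, hc⟩
      intro y hy
      rw [hh] at hy
      have hyq : q = y := by simpa using hy
      exact hyq ▸ hstep

lemma dreach_of_dpath (G : SDG V) : ∀ (l : List V) {a b : V},
    IsDPathList G a b l → G.dreach a b := by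
  intro l
  induction l with
  | nil => rintro a b ⟨h, -, -⟩; simp at h
  | cons c t ihl =>
    rintro a b ⟨hh, hl, hc⟩
    have hca : c = a := by simpa using hh
    subst hca
    match t, hl with
    | [], hl =>
      have : c = b := by simpa using hl
      exact this ▸ ReflTransGen.refl
    | d :: t', hl =>
      have h1 : G.dstep c d := (List.isChain_cons_cons.mp hc).1
      have h2 : G.dreach d b :=
        ihl ⟨rfl, by rw [List.getLast?_cons_cons] at hl; exact hl,
          (List.isChain_cons_cons.mp hc).2⟩
      exact ReflTransGen.head h1 h2

lemma finite_lists (s : Set V) (hs : s.Finite) :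
    ∀ n, {l : List V | l.length ≤ n ∧ ∀ x ∈ l, x ∈ s}.Finite := by
  intro n
  induction n with
  | zero =>
    apply Set.Finite.subset (Set.finite_singleton ([] : List V))
    rintro l ⟨h1, -⟩
    simp only [Set.mem_singleton_iff]
    exact List.eq_nil_of_length_eq_zero (Nat.le_zero.mp h1)
  | succ n ihn =>
    apply Set.Finite.subset
      (Set.Finite.insert ([] : List V)
        ((Set.Finite.prod hs ihn).image fun p => p.1 :: p.2))
    rintro l ⟨hl, hmem⟩
    cases l with
    | nil => exact Set.mem_insert _ _
    | cons a t =>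
      refine Set.mem_insert_of_mem _ ⟨(a, t), ⟨hmem a (List.mem_cons_self), ?_, ?_⟩, rfl⟩
      · show t.length ≤ n
        simp only [List.length_cons] at hl
        omega
      · exact fun x hx => hmem x (List.mem_cons_of_mem a hx)

lemma chain'_mem_head_or_step {R : V → V → Prop} :
    ∀ (l : List V), l.Chain' R → ∀ x ∈ l, l.head? = some x ∨ ∃ y, R y x := by
  intro l
  induction l with
  | nil => intro _ x hx; simp at hx
  | cons a t ihl =>
    intro hc x hx
    rcases List.mem_cons.mp hx with rfl | hxt
    · exact Or.inl rfl
    · obtain ⟨hhead, hct⟩ := List.isChain_cons.mp hc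
      rcases ihl hct x hxt with hh | ⟨y, hy⟩
      · cases t with
        | nil => simp at hxt
        | cons b t' =>
          have hxb : b = x := by simpa using hh
          exact Or.inr ⟨a, hxb ▸ hhead b rfl⟩
      · exact Or.inr ⟨y, hy⟩

lemma path_nodup (hG : RootedPartner G N) {l : List V} (hc : l.Chain' G.dstep) :
    l.Nodup := by
  by_contra h
  obtain ⟨a, ha⟩ := List.exists_duplicate_iff_not_nodup.mpr h
  have hsub : [a, a].Sublist l := List.duplicate_iff_sublist.mp ha
  haveI : IsTrans V (TransGen G.dstep) := ⟨fun _ _ _ => TransGen.trans⟩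
  have hc' : l.Chain' (TransGen G.dstep) :=
    hc.imp fun _ _ h => TransGen.single h
  have haa : TransGen G.dstep a a := (List.isChain_cons_cons.mp (hc'.sublist hsub)).1
  obtain ⟨c, hc1, hc2⟩ := (Relation.TransGen.head'_iff).mp haa
  exact partner_no_cycle hG ⟨(a, c), hc1, hc2⟩

lemma pathlists_finite (hG : RootedPartner G N) (a b : V) :
    {l : List V | IsDPathList G a b l}.Finite := by
  classical
  set S : Finset V := insert a (G.dir.image Prod.fst ∪ G.dir.image Prod.snd) with hS
  apply Set.Finite.subset (finite_lists (S : Set V) S.finite_toSet S.card)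
  rintro l ⟨hh, -, hc⟩
  have hmem : ∀ x ∈ l, x ∈ (S : Set V) := by
    intro x hx
    rcases chain'_mem_head_or_step l hc x hx with h | ⟨y, hy⟩
    · rw [hh] at h
      have hax : a = x := by injection h
      subst hax
      exact Finset.mem_coe.mpr (Finset.mem_insert_self _ _)
    · refine Finset.mem_coe.mpr (Finset.mem_insert_of_mem (Finset.mem_union_right _ ?_))
      exact Finset.mem_image.mpr ⟨(y, x), hy, rfl⟩
  refine ⟨?_, hmem⟩
  have hnd := path_nodup hG hc
  have hsub : l.toFinset ⊆ S := by
    intro x hx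
    exact Finset.mem_coe.mp (hmem x (List.mem_toFinset.mp hx))
  calc l.length = l.toFinset.card := (List.toFinset_card_of_nodup hnd).symm
    _ ≤ S.card := Finset.card_le_card hsub

lemma pathCount_pos (hG : RootedPartner G N) {a b : V} (h : G.dreach a b) :
    0 < pathCount G a b :=
  (Set.ncard_pos (pathlists_finite hG a b)).mpr (dpath_of_dreach G h)

lemma pathCount_eq_zero {G : SDG V} {a b : V} (h : ¬ G.dreach a b) :
    pathCount G a b = 0 := by
  have he : {l : List V | IsDPathList G a b l} = ∅ := by
    apply Set.eq_empty_iff_forall_notMem.mpr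
    intro l hl
    exact h (dreach_of_dpath G l hl)
  rw [pathCount, he, Set.ncard_empty]

end Proof13

theorem statement_13 {V : Type} [DecidableEq V] (N : SDG V) (hP : N.Proper)
    (hL : LNetwork N) (hTC : StronglyTreeChild N)
    (u u' v v' : V)
    (h1 : s(u, u') ∈ N.undir) (hu : InRootComp N u)
    (h2 : s(v, v') ∈ N.undir) (hv : InRootComp N v)
    (hdistinct : ¬ sim N u v) :
    muIncomp N (muD N u u') (muD N v v') := by
  have h1ex : ∃ G : SDG V, RootedPartner G N ∧ (u, u') ∈ G.dir :=
    exists_partner_dir hP hL h1 hu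
  have h2ex : ∃ G : SDG V, RootedPartner G N ∧ (v, v') ∈ G.dir :=
    exists_partner_dir hP hL h2 hv
  have e1 : muD N u u' = fun x => pathCount h1ex.choose u' x := by
    rw [muD, dif_pos h1ex]
  have e2 : muD N v v' = fun x => pathCount h2ex.choose v' x := by
    rw [muD, dif_pos h2ex]
  obtain ⟨hG1, -⟩ := h1ex.choose_spec
  obtain ⟨hG2, -⟩ := h2ex.choose_spec
  constructor
  · intro hle
    obtain ⟨x, hx0, hxt⟩ := exists_tree_leaf hG1 (hTC _ hG1) u'
    have hleaf : IsUnrootedLeaf N x := ⟨h1ex.choose, hG1, hx0⟩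
    have hpos : 0 < pathCount h1ex.choose u' x :=
      pathCount_pos hG1 (ReflTransGen.mono (fun _ _ (h : _ ∧ _) => h.1) _ _ hxt)
    have hzero : pathCount h2ex.choose v' x = 0 :=
      pathCount_eq_zero fun hd =>
        hdistinct (separation hP hG1 hG2 h1 hu h2 hv hxt hd)
    have hcmp := hle x hleaf
    rw [e1, e2] at hcmp
    simp only at hcmp
    omega
  · intro hle
    obtain ⟨y, hy0, hyt⟩ := exists_tree_leaf hG2 (hTC _ hG2) v'
    have hleaf : IsUnrootedLeaf N y := ⟨h2ex.choose, hG2, hy0⟩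
    have hpos : 0 < pathCount h2ex.choose v' y :=
      pathCount_pos hG2 (ReflTransGen.mono (fun _ _ (h : _ ∧ _) => h.1) _ _ hyt)
    have hzero : pathCount h1ex.choose u' y = 0 := by
      apply pathCount_eq_zero
      intro hd
      have hsim := separation hP hG2 hG1 h2 hv h1 hu hyt hd
      exact hdistinct ⟨hsim.2, hsim.1⟩
    have hcmp := hle y hleaf
    rw [e1, e2] at hcmp
    simp only at hcmp
    omega


end SDG
end

section
/- Let N be a complete network. A node v is the child of some directed edge (u, v) of N if and only if v lies in the directed part of N (i.e., not in any root component). -/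
open Relation

namespace SDG

variable {V : Type} [DecidableEq V]

set_option linter.unusedSectionVars false

section Helpers

variable {α : Type} [DecidableEq α]

theorem chain'_dedup {r : α → α → Prop} :
    ∀ (n : ℕ) (l : List α), l.length ≤ n → l.Chain' r →
      ∃ l', l'.Nodup ∧ l'.Chain' r ∧ l'.head? = l.head? ∧ l'.getLast? = l.getLast? ∧ l' ⊆ l := by
  intro n
  induction n with
  | zero =>
    intro l hl _
    have : l = [] := List.eq_nil_of_length_eq_zero (Nat.le_zero.mp hl)
    subst this
    exact ⟨[], by simp; exact List.isChain_nil⟩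
  | succ n ih =>
    intro l hl hc
    match l with
    | [] => exact ⟨[], by simp; exact List.isChain_nil⟩
    | x :: t =>
      by_cases hx : x ∈ t
      · obtain ⟨t1, t2, rfl⟩ := List.append_of_mem hx
        have hsuf : (x :: t2) <:+ (x :: (t1 ++ x :: t2)) := ⟨x :: t1, by simp⟩
        have hc2 : (x :: t2).Chain' r := hc.suffix hsuf
        have hlen : (x :: t2).length ≤ n := by
          simp only [List.length_cons, List.length_append] at hl ⊢; omega
        obtain ⟨l', h1, h2, h3, h4, h5⟩ := ih _ hlen hc2
        refine ⟨l', h1, h2, by simpa using h3, ?_, fun a ha => hsuf.subset (h5 ha)⟩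
        rw [h4, show x :: (t1 ++ x :: t2) = (x :: t1) ++ x :: t2 by simp,
          List.getLast?_append_cons]
      · have hct : t.Chain' r := hc.tail
        have hlen : t.length ≤ n := by simp at hl; omega
        obtain ⟨t', h1, h2, h3, h4, h5⟩ := ih _ hlen hct
        refine ⟨x :: t', List.nodup_cons.mpr ⟨fun hm => hx (h5 hm), h1⟩, ?_, by simp, ?_,
          List.cons_subset_cons x h5⟩
        · exact List.isChain_cons.mpr ⟨fun y hy => (List.isChain_cons.mp hc).1 y (h3 ▸ hy), h2⟩
        · cases t with
          | nil =>
            have : t' = [] := by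
              cases t' with
              | nil => rfl
              | cons a t'' => simp at h3
            subst this; rfl
          | cons b tb =>
            cases t' with
            | nil => simp at h3
            | cons c t'' =>
              rw [List.getLast?_cons_cons, List.getLast?_cons_cons, h4]

theorem infix_conflict {m : List α} (hn : m.Nodup) {x y : α}
    (h1 : [x, y] <:+: m) (h2 : [y, x] <:+: m) : x = y := by
  by_contra hne
  obtain ⟨s, t, hst⟩ := h1
  obtain ⟨s', t', hst'⟩ := h2
  have key : ∀ (a b : α) (s t : List α), a ≠ b → m.Nodup → s ++ [a, b] ++ t = m →
      m.idxOf b = m.idxOf a + 1 := by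
    intro a b s t hab hnd he
    have hm : m = s ++ a :: b :: t := by rw [← he]; simp
    have hnd' : (s ++ a :: b :: t).Nodup := hm ▸ hnd
    rw [List.nodup_append] at hnd'
    have ha : a ∉ s := fun h => hnd'.2.2 a h a (by simp) rfl
    have hb : b ∉ s := fun h => hnd'.2.2 b h b (by simp) rfl
    rw [hm, List.idxOf_append_of_notMem ha, List.idxOf_append_of_notMem hb,
      List.idxOf_cons_self, List.idxOf_cons_ne _ hab, List.idxOf_cons_self]
  have k1 := key x y s t hne hn hst
  have k2 := key y x s' t' (Ne.symm hne) hn hst'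
  omega

theorem chain'_mono_infix {r s : α → α → Prop} :
    ∀ (m : List α), (∀ x y, [x, y] <:+: m → r x y → s x y) → m.Chain' r → m.Chain' s
  | [], _, _ => List.isChain_nil
  | [a], _, _ => List.isChain_singleton a
  | a :: b :: t, h, hc => by
    simp only [List.Chain', List.isChain_cons_cons] at hc ⊢
    exact ⟨h a b ⟨[], t, by simp⟩ hc.1,
      chain'_mono_infix (b :: t)
        (fun x y hinf hr => h x y (hinf.trans ⟨[a], [], by simp⟩) hr) hc.2⟩

end Helpers

theorem no_sdir_cycle (N : SDG V) (hP : N.Proper) (hA : N.Acyclic)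
    {u v : V} (huv : (u, v) ∈ N.dir) (hr : N.sreach v u) : False := by
  classical
  obtain ⟨l0, hchain0, hlast0⟩ := List.exists_isChain_cons_of_relationReflTransGen hr
  have hc0 : (v :: l0).Chain' N.sstep := hchain0
  obtain ⟨m, hnd, hcm, hhead, hlastm, -⟩ := chain'_dedup (v :: l0).length (v :: l0) le_rfl hc0
  have hlastm' : m.getLast? = some u := by
    rw [hlastm, List.getLast?_eq_getLast (List.cons_ne_nil _ _), hlast0]
  have hex : ∀ p : Sym2 V, ∃ e : V × V, s(e.1, e.2) = p := fun p =>
    Sym2.ind (fun a b => ⟨(a, b), rfl⟩) p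
  set g : Sym2 V → V × V := fun p =>
    if h : ∃ e : V × V, [e.1, e.2] <:+: m ∧ s(e.1, e.2) = p then h.choose
    else (hex p).choose with hgdef
  have hg : ∀ p, s((g p).1, (g p).2) = p := by
    intro p
    by_cases h : ∃ e : V × V, [e.1, e.2] <:+: m ∧ s(e.1, e.2) = p
    · simp only [hgdef, dif_pos h]; exact h.choose_spec.2
    · simp only [hgdef, dif_neg h]; exact (hex p).choose_spec
  have hg2 : ∀ x y : V, [x, y] <:+: m → s(x, y) ∈ N.undir → g s(x, y) = (x, y) := by
    intro x y hinf hmem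
    have hxy : x ≠ y := by
      intro he; subst he; exact hP.1 _ hmem (by simp [Sym2.mk_isDiag_iff])
    have h : ∃ e : V × V, [e.1, e.2] <:+: m ∧ s(e.1, e.2) = s(x, y) := ⟨(x, y), hinf, rfl⟩
    simp only [hgdef, dif_pos h]
    obtain ⟨hinf', hs⟩ := h.choose_spec
    rcases Sym2.eq_iff.mp hs with ⟨h1, h2⟩ | ⟨h1, h2⟩
    · exact Prod.ext h1 h2
    · exfalso
      rw [h1, h2] at hinf'
      exact hxy (infix_conflict hnd hinf hinf')
  set M : SDG V := ⟨∅, N.dir ∪ N.undir.image g⟩ with hMdef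
  have hgnotdir : ∀ p ∈ N.undir, g p ∉ N.dir := by
    intro p hp hmem
    exact hP.2.2 (g p) hmem (by rw [hg p]; exact hp)
  have hdirects : Directs N M := by
    refine ⟨by simp [hMdef], Finset.subset_union_left, ?_, ?_⟩
    · intro e he hne
      rcases Finset.mem_union.mp he with h | h
      · exact absurd h hne
      · obtain ⟨p, hp, hpe⟩ := Finset.mem_image.mp h
        refine ⟨?_, by simp [hMdef]⟩
        rw [← hpe, hg p]; exact hp
    · intro p hp _
      refine ⟨g p, ⟨Finset.mem_union_right _ (Finset.mem_image_of_mem g hp),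
        hgnotdir p hp, hg p⟩, ?_⟩
      rintro e' ⟨he'1, he'2, he'3⟩
      rcases Finset.mem_union.mp he'1 with h | h
      · exact absurd h he'2
      · obtain ⟨q, hq, hqe⟩ := Finset.mem_image.mp h
        have : q = p := by rw [← he'3, ← hqe, hg q]
        rw [← hqe, this]
  have hstep : m.Chain' M.dstep := by
    refine chain'_mono_infix m (fun x y hinf hss => ?_) hcm
    rcases hss with hd | hu
    · exact Finset.mem_union_left _ hd
    · have := hg2 x y hinf hu
      exact Finset.mem_union_right _ (this ▸ Finset.mem_image_of_mem g hu)
  cases m with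
  | nil => simp at hhead
  | cons a m' =>
    have hav : a = v := by simpa using hhead
    subst hav
    have hchainm : List.Chain M.dstep a m' := hstep
    have hlast : (a :: m').getLast (List.cons_ne_nil _ _) = u := by
      have := List.getLast?_eq_getLast (l := a :: m') (List.cons_ne_nil _ _)
      rw [this] at hlastm'
      exact Option.some_injective _ hlastm'.symm |>.symm
    have hdr : M.dreach a u :=
      List.relationReflTransGen_of_exists_isChain_cons m' hchainm hlast
    exact hA M hdirects rfl ⟨(u, a), Finset.mem_union_left _ huv, hdr⟩

theorem statement_17 {V : Type} [DecidableEq V] (N : SDG V) (hP : N.Proper)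
    (hN : IsNetwork N) (hC : Complete N) (v : V) :
    (∃ u : V, (u, v) ∈ N.dir) ↔ ¬ InRootComp N v := by
  constructor
  · rintro ⟨u, hu⟩
    intro hv
    have h1 : N.sreach u v := Relation.ReflTransGen.single (Or.inl hu)
    exact no_sdir_cycle N hP hN.1 hu (hv u h1)
  · intro hv
    simp only [InRootComp, not_forall] at hv
    obtain ⟨u, h1, h2⟩ := hv
    rcases Relation.ReflTransGen.cases_tail h1 with heq | ⟨c, hc1, hc2⟩
    · exact absurd (heq ▸ Relation.ReflTransGen.refl) h2
    · rcases hc2 with hd | hu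
      · exact ⟨c, hd⟩
      · exact absurd ((hC _ hu v (Sym2.mem_mk_right c v)) u h1) h2

end SDG
end
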